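/- arXiv:2106.09848 — 2 statements merged into one kernel-verified Lean document; each statement's English description precedes it below -/
import Mathlib

section
/- Let P be a probability distribution on X × Y, f : X × Y → ℝ≥0 a measurable score function, and for τ ≥ 0 let C_τ(x) = {y ∈ Y : f(x,y) ≥ τ}. Fix ε, δ ∈ (0,1) and m ≥ 1. For a calibration sample S_m = ((x_1,y_1),…,(x_m,y_m)) define τ̂(S_m) = sup{τ ≥ 0 : U_CP(C_τ, S_m, δ) ≤ ε} (with τ̂(S_m) = 0 if no τ satisfies the constraint). Then for any measurable selection rule τ with τ(S_m) ≤ τ̂(S_m) for all S_m, the probability over S_m ~ P^m (i.i.d.) that L_P(C_{τ(S_m)}) ≤ ε is at least 1 − δ. -/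
open Finset MeasureTheory
open scoped ENNReal

/-- The CDF of the Binomial(m, θ) distribution evaluated at `k`:
`F(k; m, θ) = ∑_{i=0}^{k} C(m,i) θ^i (1−θ)^{m−i}`. -/
noncomputable def binomCDF (m k : ℕ) (θ : ℝ) : ℝ :=
  ∑ i ∈ Finset.range (k + 1), (m.choose i : ℝ) * θ ^ i * (1 - θ) ^ (m - i)

/-- The Clopper–Pearson upper bound
`θ̄(k; m, δ) := inf({θ ∈ [0,1] : F(k; m, θ) ≤ δ} ∪ {1})`. -/
noncomputable def cpUpper (k m : ℕ) (δ : ℝ) : ℝ :=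
  sInf ({θ : ℝ | θ ∈ Set.Icc (0 : ℝ) 1 ∧ binomCDF m k θ ≤ δ} ∪ {1})

/-- The error `L_P(C) := P[(x,y) : y ∉ C(x)]` of a prediction set `C : X → 2^Y`
under a distribution `P` on `X × Y`. -/
noncomputable def predError {X Y : Type*} [MeasurableSpace X] [MeasurableSpace Y]
    (P : Measure (X × Y)) (C : X → Set Y) : ℝ :=
  (P {p : X × Y | p.2 ∉ C p.1}).toReal

/-- The prediction set `C_τ(x) = {y ∈ Y : f(x,y) ≥ τ}` induced by a score function `f`. -/
def predSet {X Y : Type*} (f : X × Y → ℝ) (τ : ℝ) : X → Set Y :=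
  fun x => {y : Y | τ ≤ f (x, y)}

open Classical in
/-- The empirical error count `L̄_T(C) := Σ_{(x,y)∈T} 1[y ∉ C(x)]` of `C` on a finite
labeled sample `T` (indexed by `Fin n`). -/
noncomputable def errCount {X Y : Type*} {n : ℕ} (C : X → Set Y) (T : Fin n → X × Y) : ℕ :=
  (Finset.univ.filter fun i => (T i).2 ∉ C (T i).1).card

/-- `U_CP(C, T, δ) := θ̄(L̄_T(C); n, δ)` for a labeled sample `T` of size `n`. -/
noncomputable def UCP {X Y : Type*} {n : ℕ} (C : X → Set Y) (T : Fin n → X × Y)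
    (δ : ℝ) : ℝ :=
  cpUpper (errCount C T) n δ

/-! ### Auxiliary lemmas on `binomCDF` -/

lemma binomCDF_term_nonneg (m i : ℕ) {θ : ℝ} (h : θ ∈ Set.Icc (0:ℝ) 1) :
    0 ≤ (m.choose i : ℝ) * θ ^ i * (1 - θ) ^ (m - i) := by
  obtain ⟨h0, h1⟩ := h
  have h1' : (0:ℝ) ≤ 1 - θ := by linarith
  exact mul_nonneg (mul_nonneg (by positivity) (pow_nonneg h0 _)) (pow_nonneg h1' _)

lemma binomCDF_mono_k (m : ℕ) {k₁ k₂ : ℕ} (h : k₁ ≤ k₂) {θ : ℝ} (hθ : θ ∈ Set.Icc (0:ℝ) 1) :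
    binomCDF m k₁ θ ≤ binomCDF m k₂ θ :=
  Finset.sum_le_sum_of_subset_of_nonneg
    (Finset.range_subset_range.2 (by omega)) (fun i _ _ => binomCDF_term_nonneg m i hθ)

lemma binomCDF_hasDerivAt (m k : ℕ) (θ : ℝ) :
    HasDerivAt (binomCDF m k)
      (-(((k:ℝ)+1) * (m.choose (k+1)) * θ^k * (1-θ)^(m-(k+1)))) θ := by
  set u : ℕ → ℝ := fun i => (i : ℝ) * (m.choose i) * θ^(i-1) * (1-θ)^(m-i) with hu
  have key : ∀ i, HasDerivAt (fun θ : ℝ => (m.choose i : ℝ) * θ ^ i * (1 - θ) ^ (m - i))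
      (u i - u (i+1)) θ := by
    intro i
    have h1 : HasDerivAt (fun θ : ℝ => θ ^ i) ((i:ℝ) * θ^(i-1)) θ := hasDerivAt_pow i θ
    have h2 : HasDerivAt (fun θ : ℝ => (1 - θ) ^ (m - i))
        (((m-i : ℕ):ℝ) * (1-θ)^(m-i-1) * (-1)) θ := by
      have hb : HasDerivAt (fun θ : ℝ => 1 - θ) (-1) θ := by
        simpa using (hasDerivAt_id θ).const_sub 1
      exact (hasDerivAt_pow (m-i) (1-θ)).comp θ hb
    have h3 : HasDerivAt (fun θ : ℝ => (m.choose i : ℝ) * θ ^ i * (1 - θ) ^ (m - i)) _ θ :=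
      (h1.const_mul ((m.choose i : ℝ))).fun_mul h2
    convert h3 using 1
    simp only [hu]
    have hcomb : ((i:ℝ)+1) * (m.choose (i+1)) = ((m - i : ℕ):ℝ) * (m.choose i) := by
      have h := Nat.choose_succ_right_eq m i
      rw [mul_comm ((i:ℝ)+1) _, mul_comm ((m - i : ℕ):ℝ) _]
      exact_mod_cast h
    push_cast [Nat.add_sub_cancel]
    push_cast [Nat.add_sub_cancel] at hcomb
    rw [show m - (i+1) = m - i - 1 from (Nat.sub_sub m i 1).symm, hcomb]
    ring
  have hsum : HasDerivAt (binomCDF m k) (∑ i ∈ Finset.range (k+1), (u i - u (i+1))) θ :=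
    HasDerivAt.fun_sum fun i _ => key i
  have htel : ∑ i ∈ Finset.range (k+1), (u i - u (i+1)) = u 0 - u (k+1) :=
    Finset.sum_range_sub' u (k+1)
  rw [htel] at hsum
  convert hsum using 1
  simp only [hu]
  push_cast [Nat.add_sub_cancel]
  ring

lemma binomCDF_continuous (m k : ℕ) : Continuous (binomCDF m k) := by
  unfold binomCDF
  exact continuous_finset_sum _ fun i _ => by fun_prop

lemma binomCDF_antitoneOn (m k : ℕ) : AntitoneOn (binomCDF m k) (Set.Icc 0 1) := by
  apply antitoneOn_of_deriv_nonpos (convex_Icc 0 1)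
    ((binomCDF_continuous m k).continuousOn)
    (fun x _ => (binomCDF_hasDerivAt m k x).differentiableAt.differentiableWithinAt)
  intro x hx
  rw [interior_Icc] at hx
  rw [(binomCDF_hasDerivAt m k x).deriv]
  have h0 : (0:ℝ) ≤ x := le_of_lt hx.1
  have h1 : (0:ℝ) ≤ 1 - x := by linarith [hx.2]
  have : (0:ℝ) ≤ ((k:ℝ)+1) * (m.choose (k+1)) * x^k * (1-x)^(m-(k+1)) := by positivity
  linarith

/-! ### Auxiliary lemmas on `cpUpper` -/

lemma cpUpperSet_nonempty (k m : ℕ) (δ : ℝ) :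
    ({θ : ℝ | θ ∈ Set.Icc (0 : ℝ) 1 ∧ binomCDF m k θ ≤ δ} ∪ {1}).Nonempty :=
  ⟨1, Or.inr rfl⟩

lemma cpUpperSet_bddBelow (k m : ℕ) (δ : ℝ) :
    BddBelow ({θ : ℝ | θ ∈ Set.Icc (0 : ℝ) 1 ∧ binomCDF m k θ ≤ δ} ∪ {1}) := by
  refine ⟨0, fun θ hθ => ?_⟩
  rcases hθ with ⟨⟨h0, _⟩, _⟩ | h
  · exact h0
  · simp only [Set.mem_singleton_iff] at h; rw [h]; norm_num

lemma cpUpperSet_closed (k m : ℕ) (δ : ℝ) :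
    IsClosed ({θ : ℝ | θ ∈ Set.Icc (0 : ℝ) 1 ∧ binomCDF m k θ ≤ δ} ∪ {1}) := by
  apply IsClosed.union
  · exact (isClosed_Icc.inter ((isClosed_Iic).preimage (binomCDF_continuous m k)))
  · exact isClosed_singleton

lemma cpUpper_mem (k m : ℕ) (δ : ℝ) :
    cpUpper k m δ ∈ ({θ : ℝ | θ ∈ Set.Icc (0 : ℝ) 1 ∧ binomCDF m k θ ≤ δ} ∪ {1}) :=
  (cpUpperSet_closed k m δ).csInf_mem (cpUpperSet_nonempty k m δ) (cpUpperSet_bddBelow k m δ)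

lemma cpUpper_mono (m : ℕ) (δ : ℝ) {k₁ k₂ : ℕ} (h : k₁ ≤ k₂) :
    cpUpper k₁ m δ ≤ cpUpper k₂ m δ := by
  apply csInf_le_csInf (cpUpperSet_bddBelow k₁ m δ) (cpUpperSet_nonempty k₂ m δ)
  rintro θ (⟨hθ, hF⟩ | h1)
  · exact Or.inl ⟨hθ, le_trans (binomCDF_mono_k m h hθ) hF⟩
  · exact Or.inr h1

lemma binomCDF_le_of_cpUpper_le {k m : ℕ} {δ p : ℝ}
    (hlt : cpUpper k m δ < 1) (hle : cpUpper k m δ ≤ p) (hp : p ≤ 1) :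
    binomCDF m k p ≤ δ := by
  rcases cpUpper_mem k m δ with ⟨hmem, hF⟩ | h1
  · have hp0 : (0:ℝ) ≤ p := le_trans hmem.1 hle
    exact le_trans (binomCDF_antitoneOn m k hmem ⟨hp0, hp⟩ hle) hF
  · simp only [Set.mem_singleton_iff] at h1
    rw [h1] at hlt; exact absurd hlt (lt_irrefl 1)

/-! ### The binomial law of the error count under `Measure.pi` -/

open Classical in
lemma pi_count_eq {Z : Type*} [MeasurableSpace Z] (P : Measure Z) [IsProbabilityMeasure P]
    (E : Set Z) (hE : MeasurableSet E) (m j : ℕ) :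
    (Measure.pi fun _ : Fin m => P) {S | (Finset.univ.filter fun i => S i ∈ E).card = j}
      = (m.choose j : ℝ≥0∞) * (P E)^j * (1 - P E)^(m - j) := by
  classical
  have hdecomp : {S : Fin m → Z | (Finset.univ.filter fun i => S i ∈ E).card = j}
      = ⋃ t ∈ Finset.powersetCard j (Finset.univ : Finset (Fin m)),
          Set.univ.pi (fun i => if i ∈ t then E else Eᶜ) := by
    ext S
    simp only [Set.mem_setOf_eq, Set.mem_iUnion, Finset.mem_powersetCard, Set.mem_pi,
      Set.mem_univ, forall_true_left]
    constructor
    · intro h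
      refine ⟨Finset.univ.filter fun i => S i ∈ E, ⟨Finset.subset_univ _, h⟩, fun i => ?_⟩
      by_cases hi : S i ∈ E <;> simp [hi]
    · rintro ⟨t, ⟨-, ht⟩, hS⟩
      have : (Finset.univ.filter fun i => S i ∈ E) = t := by
        ext i
        simp only [Finset.mem_filter, Finset.mem_univ, true_and]
        have := hS i
        by_cases hi : i ∈ t <;> simp [hi] at this ⊢
        · exact this
        · exact this
      rw [this, ht]
  rw [hdecomp]
  rw [measure_biUnion_finset]
  · have hterm : ∀ t ∈ Finset.powersetCard j (Finset.univ : Finset (Fin m)),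
        (Measure.pi fun _ : Fin m => P) (Set.univ.pi (fun i => if i ∈ t then E else Eᶜ))
          = (P E)^j * (1 - P E)^(m - j) := by
      intro t ht
      rw [Finset.mem_powersetCard] at ht
      rw [Measure.pi_pi]
      rw [← Finset.prod_mul_prod_compl t]
      have h1 : ∏ i ∈ t, P (if i ∈ t then E else Eᶜ) = (P E)^j := by
        rw [Finset.prod_congr rfl (fun i hi => by rw [if_pos hi]), Finset.prod_const, ht.2]
      have h2 : ∏ i ∈ tᶜ, P (if i ∈ t then E else Eᶜ) = (1 - P E)^(m-j) := by
        have hc : ∀ i ∈ tᶜ, P (if i ∈ t then E else Eᶜ) = 1 - P E := by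
          intro i hi
          rw [Finset.mem_compl] at hi
          rw [if_neg hi, measure_compl hE (measure_ne_top P E), measure_univ]
        rw [Finset.prod_congr rfl hc, Finset.prod_const, Finset.card_compl, ht.2,
          Fintype.card_fin]
      rw [h1, h2]
    rw [Finset.sum_congr rfl hterm, Finset.sum_const, Finset.card_powersetCard,
      Finset.card_univ, Fintype.card_fin, nsmul_eq_mul, mul_assoc]
  · intro t ht s hs hts
    simp only [Function.onFun]
    apply Set.disjoint_left.2
    intro S hSt hSs
    apply hts
    simp only [Set.mem_pi, Set.mem_univ, forall_true_left] at hSt hSs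
    ext i
    constructor
    · intro hi
      have h1 := hSt i; have h2 := hSs i
      rw [if_pos hi] at h1
      by_contra hi2
      rw [if_neg hi2] at h2
      exact h2 h1
    · intro hi
      have h1 := hSt i; have h2 := hSs i
      rw [if_pos hi] at h2
      by_contra hi2
      rw [if_neg hi2] at h1
      exact h1 h2
  · intro t ht
    exact MeasurableSet.univ_pi fun i => by
      by_cases hi : i ∈ t <;> simp [hi, hE, hE.compl]

open Classical in
lemma count_measurable {Z : Type*} [MeasurableSpace Z] (E : Set Z) (hE : MeasurableSet E)
    (m : ℕ) : Measurable fun S : Fin m → Z => (Finset.univ.filter fun i => S i ∈ E).card := by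
  classical
  have : (fun S : Fin m → Z => (Finset.univ.filter fun i => S i ∈ E).card)
      = fun S => ∑ i : Fin m, if S i ∈ E then 1 else 0 := by
    funext S; rw [Finset.card_filter]
  rw [this]
  apply Finset.measurable_sum
  intro i _
  exact Measurable.ite ((measurable_pi_apply i) hE) measurable_const measurable_const

open Classical in
lemma pi_count_le_eq {Z : Type*} [MeasurableSpace Z] (P : Measure Z) [IsProbabilityMeasure P]
    (E : Set Z) (hE : MeasurableSet E) (m k : ℕ) :
    (Measure.pi fun _ : Fin m => P) {S | (Finset.univ.filter fun i => S i ∈ E).card ≤ k}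
      = ENNReal.ofReal (binomCDF m k ((P E).toReal)) := by
  classical
  set q := P E with hq
  have hqt : q ≠ ⊤ := measure_ne_top P E
  have hq1 : q ≤ 1 := prob_le_one
  set p := q.toReal with hp
  have hp0 : 0 ≤ p := ENNReal.toReal_nonneg
  have hdecomp : {S : Fin m → Z | (Finset.univ.filter fun i => S i ∈ E).card ≤ k}
      = ⋃ j ∈ Finset.range (k+1),
          {S : Fin m → Z | (Finset.univ.filter fun i => S i ∈ E).card = j} := by
    ext S
    simp only [Set.mem_setOf_eq, Set.mem_iUnion, Finset.mem_range]
    constructor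
    · intro h; exact ⟨_, by omega, rfl⟩
    · rintro ⟨j, hj, h⟩; omega
  rw [hdecomp, measure_biUnion_finset]
  · rw [Finset.sum_congr rfl (fun j _ => pi_count_eq P E hE m j)]
    unfold binomCDF
    rw [ENNReal.ofReal_sum_of_nonneg]
    · apply Finset.sum_congr rfl
      intro j _
      rw [ENNReal.ofReal_mul (by positivity), ENNReal.ofReal_mul (by positivity),
        ENNReal.ofReal_pow hp0, ENNReal.ofReal_natCast, ENNReal.ofReal_pow (by
          have : q.toReal ≤ 1 := by
            rw [show (1:ℝ) = (1:ℝ≥0∞).toReal by simp]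
            exact ENNReal.toReal_mono (by simp) hq1
          linarith)]
      have h1 : ENNReal.ofReal p = q := ENNReal.ofReal_toReal hqt
      have h2 : ENNReal.ofReal (1 - p) = 1 - q := by
        rw [hp, ← ENNReal.toReal_one, ← ENNReal.toReal_sub_of_le hq1 (by simp),
          ENNReal.ofReal_toReal]
        exact (tsub_le_self.trans_lt (by simp : (1:ℝ≥0∞) < ⊤)).ne
      rw [h1, h2]
    · intro j _
      have hq1' : p ≤ 1 := by
        rw [show (1:ℝ) = (1:ℝ≥0∞).toReal by simp]
        exact ENNReal.toReal_mono (by simp) hq1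
      have : (0:ℝ) ≤ 1 - p := by linarith
      positivity
  · intro a _ b _ hab
    simp only [Function.onFun]
    apply Set.disjoint_left.2
    intro S h1 h2
    simp only [Set.mem_setOf_eq] at h1 h2
    exact hab (h1 ▸ h2 ▸ rfl)
  · intro j _
    exact (count_measurable E hE m) (MeasurableSet.singleton j)

open Classical in
lemma superuniform {Z : Type*} [MeasurableSpace Z] (P : Measure Z) [IsProbabilityMeasure P]
    (E : Set Z) (hE : MeasurableSet E) (m : ℕ) (δ : ℝ) :
    (Measure.pi fun _ : Fin m => P)
      {S | binomCDF m ((Finset.univ.filter fun i => S i ∈ E).card) ((P E).toReal) ≤ δ}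
      ≤ ENNReal.ofReal δ := by
  classical
  set p := (P E).toReal
  have : DecidablePred fun k => binomCDF m k p ≤ δ := fun _ => Classical.dec _
  by_cases hex : ∃ k, k ≤ m ∧ binomCDF m k p ≤ δ
  · obtain ⟨k0, hk0m, hk0⟩ := hex
    set k' := Nat.findGreatest (fun k => binomCDF m k p ≤ δ) m with hk'
    have hspec : binomCDF m k' p ≤ δ :=
      Nat.findGreatest_spec (P := fun k => binomCDF m k p ≤ δ) hk0m hk0
    have hsub : {S : Fin m → Z |
        binomCDF m ((Finset.univ.filter fun i => S i ∈ E).card) p ≤ δ}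
        ⊆ {S | (Finset.univ.filter fun i => S i ∈ E).card ≤ k'} := by
      intro S hS
      simp only [Set.mem_setOf_eq] at hS ⊢
      exact Nat.le_findGreatest (le_trans (Finset.card_filter_le _ _) (by simp)) hS
    calc (Measure.pi fun _ : Fin m => P) _ ≤ _ := measure_mono hsub
      _ = ENNReal.ofReal (binomCDF m k' p) := pi_count_le_eq P E hE m k'
      _ ≤ ENNReal.ofReal δ := ENNReal.ofReal_le_ofReal hspec
  · have : {S : Fin m → Z |
        binomCDF m ((Finset.univ.filter fun i => S i ∈ E).card) p ≤ δ} = ∅ := by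
      ext S
      simp only [Set.mem_setOf_eq, Set.mem_empty_iff_false, iff_false]
      intro h
      exact hex ⟨_, le_trans (Finset.card_filter_le _ _) (by simp), h⟩
    rw [this]
    simp

/-! ### Main theorem -/

/-- **PAC prediction sets (Theorem 1 of the paper).** -/
theorem pac_prediction_set {X Y : Type*} [MeasurableSpace X] [MeasurableSpace Y]
    (P : Measure (X × Y)) [IsProbabilityMeasure P]
    (f : X × Y → ℝ) (hf : Measurable f) (hf0 : ∀ p, 0 ≤ f p)
    (ε δ : ℝ) (hε : ε ∈ Set.Ioo (0 : ℝ) 1) (hδ : δ ∈ Set.Ioo (0 : ℝ) 1)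
    (m : ℕ) (hm : 1 ≤ m)
    (τhat : (Fin m → X × Y) → ℝ)
    (hτhat : τhat = fun S =>
      sSup ({τ : ℝ | 0 ≤ τ ∧ UCP (predSet f τ) S δ ≤ ε} ∪ {0}))
    (τsel : (Fin m → X × Y) → ℝ) (hmeas : Measurable τsel)
    (hsel : ∀ S, τsel S ≤ τhat S) :
    ENNReal.ofReal (1 - δ) ≤
      (Measure.pi fun _ : Fin m => P)
        {S : Fin m → X × Y | predError P (predSet f (τsel S)) ≤ ε} := by
  classical
  obtain ⟨hε0, hε1⟩ := hε
  obtain ⟨hδ0, hδ1⟩ := hδ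
  -- the error of `predSet f τ` is `P {f < τ}`
  have herr : ∀ τ : ℝ, predError P (predSet f τ) = (P {p : X × Y | f p < τ}).toReal := by
    intro τ
    unfold predError predSet
    have hset : {p : X × Y | p.2 ∉ {y : Y | τ ≤ f (p.1, y)}} = {p : X × Y | f p < τ} := by
      ext p
      simp [Set.mem_setOf_eq, not_le, Prod.mk.eta]
    rw [hset]
  -- the critical level τ₀
  set A₀ : Set ℝ := {τ | P {p : X × Y | f p < τ} ≤ ENNReal.ofReal ε} with hA₀
  have hA0mem : (0:ℝ) ∈ A₀ := by
    simp only [hA₀, Set.mem_setOf_eq]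
    have h0 : {p : X × Y | f p < 0} = ∅ := by
      ext p; simp only [Set.mem_setOf_eq, Set.mem_empty_iff_false, iff_false, not_lt]
      exact hf0 p
    rw [h0]; simp
  have hA0down : ∀ {a b : ℝ}, a ≤ b → b ∈ A₀ → a ∈ A₀ := by
    intro a b hab hb
    exact le_trans (measure_mono (fun p hp => lt_of_lt_of_le hp hab)) hb
  -- A₀ is bounded above
  have hsupP : (⨆ n : ℕ, P {p : X × Y | f p < n}) = 1 := by
    rw [← Directed.measure_iUnion]
    · have : ⋃ n : ℕ, {p : X × Y | f p < n} = Set.univ := by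
        ext p
        simp only [Set.mem_iUnion, Set.mem_setOf_eq, Set.mem_univ, iff_true]
        obtain ⟨n, hn⟩ := exists_nat_gt (f p)
        exact ⟨n, hn⟩
      rw [this, measure_univ]
    · refine Monotone.directed_le fun a b hab p hp => ?_
      simp only [Set.mem_setOf_eq] at hp ⊢
      have hcast : (a:ℝ) ≤ (b:ℝ) := by exact_mod_cast hab
      linarith
  have hN : ∃ n : ℕ, ENNReal.ofReal ε < P {p : X × Y | f p < n} := by
    have h1 : ENNReal.ofReal ε < 1 := by
      rw [← ENNReal.ofReal_one]
      exact (ENNReal.ofReal_lt_ofReal_iff (by norm_num)).2 hε1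
    rw [← hsupP] at h1
    exact lt_iSup_iff.1 h1
  obtain ⟨N, hNlt⟩ := hN
  have hA0bdd : BddAbove A₀ := by
    refine ⟨N, fun τ hτ => ?_⟩
    by_contra hlt
    push_neg at hlt
    have h1 : P {p : X × Y | f p < N} ≤ P {p : X × Y | f p < τ} :=
      measure_mono (fun p hp => lt_trans hp hlt)
    exact absurd (lt_of_lt_of_le hNlt (le_trans h1 hτ)) (lt_irrefl _)
  set τ₀ := sSup A₀ with hτ₀
  have hτ₀0 : 0 ≤ τ₀ := le_csSup hA0bdd hA0mem
  -- τ₀ ∈ A₀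
  have hτ₀mem : P {p : X × Y | f p < τ₀} ≤ ENNReal.ofReal ε := by
    have hsubset : {p : X × Y | f p < τ₀} ⊆ ⋃ n : ℕ, {p : X × Y | f p < τ₀ - 1/(n+1)} := by
      intro p hp
      simp only [Set.mem_setOf_eq] at hp
      obtain ⟨n, hn⟩ := exists_nat_one_div_lt (show 0 < τ₀ - f p by linarith)
      exact Set.mem_iUnion.2 ⟨n, by simp only [Set.mem_setOf_eq]; push_cast at hn ⊢; linarith⟩
    refine le_trans (measure_mono hsubset) ?_
    rw [Directed.measure_iUnion]
    · apply iSup_le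
      intro n
      have hpos : (0:ℝ) < 1/((n:ℝ)+1) := by positivity
      have hlt : τ₀ - 1/((n:ℝ)+1) < τ₀ := by linarith
      obtain ⟨a, haA, ha⟩ := exists_lt_of_lt_csSup ⟨0, hA0mem⟩ hlt
      exact hA0down (le_of_lt ha) haA
    · apply Monotone.directed_le
      intro a b hab p hp
      simp only [Set.mem_setOf_eq] at hp ⊢
      have : 1/((b:ℝ)+1) ≤ 1/((a:ℝ)+1) := by
        apply one_div_le_one_div_of_le
        · positivity
        · exact_mod_cast by omega
      linarith
  -- the critical probability p* ≥ ε
  set E : Set (X × Y) := {p : X × Y | f p ≤ τ₀} with hEdef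
  have hE : MeasurableSet E := hf measurableSet_Iic
  set pstar : ℝ := (P E).toReal with hpstar
  have hp1 : pstar ≤ 1 := by
    rw [hpstar, show (1:ℝ) = (1:ℝ≥0∞).toReal by simp]
    exact ENNReal.toReal_mono (by simp) prob_le_one
  have hεp : ε ≤ pstar := by
    have hInter : E = ⋂ n : ℕ, {p : X × Y | f p < τ₀ + 1/(n+1)} := by
      ext p
      simp only [hEdef, Set.mem_setOf_eq, Set.mem_iInter]
      constructor
      · intro h n
        have : (0:ℝ) < 1/((n:ℝ)+1) := by positivity
        linarith
      · intro h
        by_contra hgt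
        push_neg at hgt
        obtain ⟨n, hn⟩ := exists_nat_one_div_lt (show 0 < f p - τ₀ by linarith)
        have := h n
        push_cast at hn this
        linarith
    have hge : ENNReal.ofReal ε ≤ P E := by
      rw [hInter, Directed.measure_iInter]
      · apply le_iInf
        intro n
        have hnot : τ₀ + 1/((n:ℝ)+1) ∉ A₀ := by
          intro hmem
          have := le_csSup hA0bdd hmem
          have hpos : (0:ℝ) < 1/((n:ℝ)+1) := by positivity
          rw [← hτ₀] at this
          linarith
        simp only [hA₀, Set.mem_setOf_eq, not_le] at hnot
        exact le_of_lt hnot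
      · exact fun n => ((hf measurableSet_Iio)).nullMeasurableSet
      · apply Antitone.directed_ge
        intro a b hab p hp
        simp only [Set.mem_setOf_eq] at hp ⊢
        have : 1/((b:ℝ)+1) ≤ 1/((a:ℝ)+1) := by
          apply one_div_le_one_div_of_le
          · positivity
          · exact_mod_cast by omega
        linarith
      · exact ⟨0, measure_ne_top P _⟩
    rw [hpstar]
    exact (ENNReal.ofReal_le_iff_le_toReal (measure_ne_top P E)).1 hge
  -- the bad event
  set bad : Set (Fin m → X × Y) :=
    {S | binomCDF m ((Finset.univ.filter fun i => S i ∈ E).card) pstar ≤ δ} with hbad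
  have hbadmeas : MeasurableSet bad := by
    have : bad = (fun S : Fin m → X × Y => (Finset.univ.filter fun i => S i ∈ E).card) ⁻¹'
        {k : ℕ | binomCDF m k pstar ≤ δ} := rfl
    rw [this]
    exact (count_measurable E hE m) (Set.to_countable _).measurableSet
  have hbadle : (Measure.pi fun _ : Fin m => P) bad ≤ ENNReal.ofReal δ :=
    superuniform P E hE m δ
  -- the complement of the bad event is good
  have hsubset : badᶜ ⊆ {S : Fin m → X × Y | predError P (predSet f (τsel S)) ≤ ε} := by
    intro S hS
    simp only [Set.mem_compl_iff, hbad, Set.mem_setOf_eq] at hS ⊢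
    by_contra hgt
    push_neg at hgt
    apply hS
    -- τ₀ < τhat S
    have h1 : τ₀ < τhat S := by
      by_contra hle
      push_neg at hle
      have hss : τsel S ≤ τ₀ := le_trans (hsel S) hle
      have : predError P (predSet f (τsel S)) ≤ ε := by
        rw [herr]
        have hmono : P {p : X × Y | f p < τsel S} ≤ ENNReal.ofReal ε :=
          le_trans (measure_mono (fun p hp => lt_of_lt_of_le hp hss)) hτ₀mem
        exact (ENNReal.le_ofReal_iff_toReal_le (measure_ne_top P _) hε0.le).1 hmono
      linarith
    -- extract a feasible x > τ₀
    rw [hτhat] at h1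
    simp only at h1
    have hne : (({τ : ℝ | 0 ≤ τ ∧ UCP (predSet f τ) S δ ≤ ε} ∪ {0}) : Set ℝ).Nonempty :=
      ⟨0, Or.inr rfl⟩
    obtain ⟨x, hxmem, hx⟩ := exists_lt_of_lt_csSup hne h1
    have hxAS : 0 ≤ x ∧ UCP (predSet f x) S δ ≤ ε := by
      rcases hxmem with h | h
      · exact h
      · simp only [Set.mem_singleton_iff] at h
        rw [h] at hx
        linarith
    obtain ⟨hx0, hxU⟩ := hxAS
    -- the count for E is at most the error count at level x
    have hcount : (Finset.univ.filter fun i => S i ∈ E).card ≤ errCount (predSet f x) S := by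
      unfold errCount
      apply Finset.card_le_card
      intro i hi
      simp only [Finset.mem_filter, Finset.mem_univ, true_and, hEdef, Set.mem_setOf_eq] at hi ⊢
      simp only [predSet, Set.mem_setOf_eq, not_le, Prod.mk.eta]
      linarith
    -- conclude via the CP bound
    unfold UCP at hxU
    have hcp : cpUpper ((Finset.univ.filter fun i => S i ∈ E).card) m δ ≤ ε :=
      le_trans (cpUpper_mono m δ hcount) hxU
    exact binomCDF_le_of_cpUpper_le (lt_of_le_of_lt hcp hε1) (le_trans hcp hεp) hp1
  -- final computation
  calc ENNReal.ofReal (1 - δ)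
      = 1 - ENNReal.ofReal δ := by rw [ENNReal.ofReal_sub _ hδ0.le, ENNReal.ofReal_one]
    _ ≤ 1 - (Measure.pi fun _ : Fin m => P) bad := tsub_le_tsub_left hbadle 1
    _ = (Measure.pi fun _ : Fin m => P) badᶜ := (prob_compl_eq_one_sub hbadmeas).symm
    _ ≤ _ := measure_mono hsubset
end

section
/- Fix a labeled sample S_m = ((x_1,y_1),…,(x_m,y_m)), a vector V ∈ [0,1]^m, a prediction set C : X → 2^Y, a bound b > 0, and δ ∈ (0,1). For every index i ∈ {1,…,m}, the map w_i ↦ U_RSCP(C, S_m, V, w, b, δ), with all other coordinates w_j (j ≠ i) of w ∈ ℝ≥0^m held fixed, is monotonically non-decreasing in w_i if y_i ∉ C(x_i), and monotonically non-increasing in w_i if y_i ∈ C(x_i). -/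
open Finset

open Classical in
/-- The rejection sampling Clopper–Pearson bound
`U_RSCP(C, S_m, V, w, b, δ) := θ̄(L̄_T(C); |T|, δ)`, where
`T = T(S_m, V, w, b) = {(x_i, y_i) : V_i ≤ w_i/b}` is the rejection-sampled subset and
`L̄_T(C) = Σ_{(x,y)∈T} 1[y ∉ C(x)]` is the empirical error count on `T`. -/
noncomputable def URSCP {X Y : Type*} {m : ℕ} (C : X → Set Y) (S : Fin m → X × Y)
    (V : Fin m → ℝ) (w : Fin m → ℝ) (b : ℝ) (δ : ℝ) : ℝ :=
  cpUpper
    ((Finset.univ.filter fun i => V i ≤ w i / b ∧ (S i).2 ∉ C (S i).1).card)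
    ((Finset.univ.filter fun i : Fin m => V i ≤ w i / b).card) δ

lemma binomCDF_succ_succ (n k : ℕ) (θ : ℝ) :
    binomCDF (n+1) (k+1) θ = (1-θ) * binomCDF n (k+1) θ + θ * binomCDF n k θ := by
  unfold binomCDF
  rw [Finset.mul_sum, Finset.mul_sum, Finset.sum_range_succ' (n := k+1),
      Finset.sum_range_succ' (fun i => (1-θ) * ((n.choose i : ℝ) * θ ^ i * (1-θ) ^ (n - i))) (k+1)]
  have h1 : ∀ x ∈ Finset.range (k+1),
      ((n+1).choose (x+1) : ℝ) * θ ^ (x+1) * (1-θ) ^ (n+1 - (x+1)) =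
      (1-θ) * ((n.choose (x+1) : ℝ) * θ ^ (x+1) * (1-θ) ^ (n - (x+1)))
        + θ * ((n.choose x : ℝ) * θ ^ x * (1-θ) ^ (n - x)) := by
    intro x _
    rw [Nat.choose_succ_succ]
    push_cast
    rcases le_or_gt (x+1) n with hx | hx
    · have hnx : n - x = (n - (x+1)) + 1 := by omega
      rw [hnx]
      ring
    · have hc1 : n.choose (x+1) = 0 := Nat.choose_eq_zero_of_lt hx
      rcases le_or_gt (x+1) (n+1) with hx2 | hx2
      · have hxn : x = n := by omega
        subst hxn
        simp [hc1]
        ring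
      · have hc2 : (n+1).choose (x+1) = 0 := Nat.choose_eq_zero_of_lt hx2
        have hc3 : n.choose x = 0 := Nat.choose_eq_zero_of_lt (by omega)
        simp [hc1, hc2, hc3]
  rw [Finset.sum_congr rfl h1, Finset.sum_add_distrib]
  simp only [Nat.choose_zero_right, Nat.cast_one, pow_zero, Nat.sub_zero]
  ring_nf

lemma binomCDF_succ_zero (n : ℕ) (θ : ℝ) :
    binomCDF (n+1) 0 θ = (1-θ) * binomCDF n 0 θ := by
  simp [binomCDF, pow_succ]
  ring

lemma binomCDF_mono_k_s11 (n k : ℕ) {θ : ℝ} (hθ : θ ∈ Set.Icc (0:ℝ) 1) :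
    binomCDF n k θ ≤ binomCDF n (k+1) θ := by
  unfold binomCDF
  rw [Finset.sum_range_succ (n := k+1)]
  have : 0 ≤ (n.choose (k+1) : ℝ) * θ ^ (k+1) * (1-θ) ^ (n - (k+1)) := by
    have h1 := hθ.1
    have h2 : (0:ℝ) ≤ 1 - θ := by have := hθ.2; linarith
    positivity
  linarith

lemma binomCDF_A (n k : ℕ) {θ : ℝ} (hθ : θ ∈ Set.Icc (0:ℝ) 1) :
    binomCDF n k θ ≤ binomCDF (n+1) (k+1) θ := by
  rw [binomCDF_succ_succ]
  have h := binomCDF_mono_k_s11 n k hθ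
  have h1 := hθ.1; have h2 := hθ.2
  nlinarith

lemma binomCDF_nonneg (n k : ℕ) {θ : ℝ} (hθ : θ ∈ Set.Icc (0:ℝ) 1) :
    0 ≤ binomCDF n k θ := by
  unfold binomCDF
  apply Finset.sum_nonneg
  intro x _
  have h1 := hθ.1
  have h2 : (0:ℝ) ≤ 1 - θ := by have := hθ.2; linarith
  positivity

lemma binomCDF_B (n k : ℕ) {θ : ℝ} (hθ : θ ∈ Set.Icc (0:ℝ) 1) :
    binomCDF (n+1) k θ ≤ binomCDF n k θ := by
  have h1 := hθ.1; have h2 := hθ.2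
  cases k with
  | zero =>
    rw [binomCDF_succ_zero]
    have := binomCDF_nonneg n 0 hθ
    nlinarith
  | succ k =>
    rw [binomCDF_succ_succ]
    have h := binomCDF_mono_k_s11 n k hθ
    nlinarith

lemma cpUpper_le (k₁ m₁ k₂ m₂ : ℕ) (δ : ℝ)
    (h : ∀ θ ∈ Set.Icc (0:ℝ) 1, binomCDF m₁ k₁ θ ≤ binomCDF m₂ k₂ θ) :
    cpUpper k₁ m₁ δ ≤ cpUpper k₂ m₂ δ := by
  apply csInf_le_csInf
  · refine ⟨0, ?_⟩
    rintro θ (⟨hθ, -⟩ | hθ)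
    · exact hθ.1
    · simp only [Set.mem_singleton_iff] at hθ; simp [hθ]
  · exact ⟨1, Or.inr rfl⟩
  · rintro θ (⟨hθ, hle⟩ | hθ)
    · exact Or.inl ⟨hθ, le_trans (h θ hθ) hle⟩
    · exact Or.inr hθ

lemma cp_congr {k k' n n' : ℕ} (hk : k = k') (hn : n = n') (δ : ℝ) :
    cpUpper k n δ = cpUpper k' n' δ := by subst hk; subst hn; rfl

lemma card_filter_congr' {α : Type*} [Fintype α] {p q : α → Prop}
    [DecidablePred p] [DecidablePred q] (h : ∀ a, p a ↔ q a) :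
    (Finset.univ.filter p).card = (Finset.univ.filter q).card := by
  congr 1
  apply Finset.filter_congr
  intro a _
  exact h a

lemma card_filter_insert {α : Type*} [Fintype α] [DecidableEq α] {p q : α → Prop}
    [DecidablePred p] [DecidablePred q] {i : α}
    (h : ∀ a, a ≠ i → (q a ↔ p a)) (hpi : ¬ p i) (hqi : q i) :
    (Finset.univ.filter q).card = (Finset.univ.filter p).card + 1 := by
  have he : Finset.univ.filter q = insert i (Finset.univ.filter p) := by
    ext a
    simp only [Finset.mem_filter, Finset.mem_univ, true_and, Finset.mem_insert]
    by_cases ha : a = i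
    · subst ha; simp [hqi]
    · rw [h a ha]; simp [ha]
  rw [he, Finset.card_insert_of_notMem (by simp [hpi])]

/-- **Monotonicity of the RSCP bound in the importance weights (Lemma 1).** Fix a
labeled sample `S`, a vector `V ∈ [0,1]^m`, a prediction set `C`, a bound `b > 0`, and
`δ ∈ (0,1)`. For every `i`, the map `w_i ↦ U_RSCP(C, S, V, w, b, δ)` (all other
coordinates held fixed, `w` ranging over nonnegative vectors) is monotonically
non-decreasing in `w_i` if `y_i ∉ C(x_i)`, and monotonically non-increasing in `w_i` if
`y_i ∈ C(x_i)`. -/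
theorem URSCP_monotone_in_weight {X Y : Type*} {m : ℕ}
    (S : Fin m → X × Y) (V : Fin m → ℝ) (hV : ∀ i, V i ∈ Set.Icc (0 : ℝ) 1)
    (C : X → Set Y) (b : ℝ) (hb : 0 < b) (δ : ℝ) (hδ : δ ∈ Set.Ioo (0 : ℝ) 1)
    (i : Fin m) (w w' : Fin m → ℝ)
    (hw : ∀ j, 0 ≤ w j) (hw' : ∀ j, 0 ≤ w' j)
    (hfix : ∀ j, j ≠ i → w j = w' j) (hii : w i ≤ w' i) :
    ((S i).2 ∉ C (S i).1 → URSCP C S V w b δ ≤ URSCP C S V w' b δ) ∧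
    ((S i).2 ∈ C (S i).1 → URSCP C S V w' b δ ≤ URSCP C S V w b δ) := by
  classical
  have hdiv : w i / b ≤ w' i / b := by gcongr
  constructor
  · intro hmiss
    by_cases h1 : V i ≤ w i / b
    · have h2 : V i ≤ w' i / b := h1.trans hdiv
      unfold URSCP
      refine le_of_eq (cp_congr ?_ ?_ δ)
      · exact card_filter_congr' fun j => by
          by_cases hj : j = i
          · subst hj; simp [h1, h2]
          · rw [hfix j hj]
      · exact card_filter_congr' fun j => by
          by_cases hj : j = i
          · subst hj; simp [h1, h2]
          · rw [hfix j hj]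
    · by_cases h2 : V i ≤ w' i / b
      · unfold URSCP
        refine le_trans (cpUpper_le _ _ _ _ δ fun θ hθ => binomCDF_A _ _ hθ)
          (le_of_eq (cp_congr ?_ ?_ δ))
        · refine (card_filter_insert (i := i) ?_ ?_ ?_).symm
          · intro j hj; rw [hfix j hj]
          · exact fun hc => h1 hc.1
          · exact ⟨h2, hmiss⟩
        · refine (card_filter_insert (i := i) ?_ ?_ ?_).symm
          · intro j hj; rw [hfix j hj]
          · exact h1
          · exact h2
      · have h1' : ¬ V i ≤ w i / b := h1
        unfold URSCP
        refine le_of_eq (cp_congr ?_ ?_ δ)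
        · exact card_filter_congr' fun j => by
            by_cases hj : j = i
            · subst hj; simp [h1, h2]
            · rw [hfix j hj]
        · exact card_filter_congr' fun j => by
            by_cases hj : j = i
            · subst hj; simp [h1, h2]
            · rw [hfix j hj]
  · intro hcov
    by_cases h1 : V i ≤ w i / b
    · have h2 : V i ≤ w' i / b := h1.trans hdiv
      unfold URSCP
      refine le_of_eq (cp_congr ?_ ?_ δ)
      · exact card_filter_congr' fun j => by
          by_cases hj : j = i
          · subst hj; simp [h1, h2]
          · rw [hfix j hj]
      · exact card_filter_congr' fun j => by
          by_cases hj : j = i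
          · subst hj; simp [h1, h2]
          · rw [hfix j hj]
    · by_cases h2 : V i ≤ w' i / b
      · unfold URSCP
        refine le_trans (le_of_eq (cp_congr ?_ ?_ δ))
          (cpUpper_le _ _ _ _ δ fun θ hθ => binomCDF_B _ _ hθ)
        · exact card_filter_congr' fun j => by
            by_cases hj : j = i
            · subst hj; simp [hcov]
            · rw [hfix j hj]
        · refine card_filter_insert (i := i) ?_ ?_ ?_
          · intro j hj; rw [hfix j hj]
          · exact h1
          · exact h2
      · unfold URSCP
        refine le_of_eq (cp_congr ?_ ?_ δ)
        · exact card_filter_congr' fun j => by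
            by_cases hj : j = i
            · subst hj; simp [h1, h2]
            · rw [hfix j hj]
        · exact card_filter_congr' fun j => by
            by_cases hj : j = i
            · subst hj; simp [h1, h2]
            · rw [hfix j hj]
end
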